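/- Let π : V(𝓛) → V(𝓢) be a fibration between graphs. Assume that 𝓢 is one-ended and that for every finite subset F of V(𝓢), denoting by K the infinite connected component of the complement of F in 𝓢, the subgraph of 𝓛 induced on π⁻¹(K) is connected. Then C*_E(𝓢) ≤ C_E(𝓛). -/

import Mathlib

open MeasureTheory Set
open scoped ENNReal

namespace PercPaper

/-! ### The Bernoulli(p) product measure on `ι → Bool`

We realize the Bernoulli product measure as the pushforward of the uniform
measure on `[0,1)` under the standard digit-interleaving construction:
the binary digits of a uniform point of `[0,1)` are i.i.d. fair coins; by
interleaving (via the pairing function `Nat.pair`) we extract countably many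
independent uniform random variables, and thresholding each at `p` produces
i.i.d. Bernoulli(`p`) bits. -/

/-- The `k`-th binary digit of a real number `x ∈ [0,1)`. -/
noncomputable def digit (k : ℕ) (x : ℝ) : Bool :=
  decide (⌊x * 2 ^ (k + 1)⌋ % 2 = 1)

/-- The `i`-th of countably many independent uniforms extracted from a single
uniform `x ∈ [0,1)` by digit interleaving. -/
noncomputable def unif (i : ℕ) (x : ℝ) : ℝ :=
  ∑' k : ℕ, if digit (Nat.pair i k) x then ((2 : ℝ) ^ (k + 1))⁻¹ else 0

/-- The coordinates of the Bernoulli(`p`) product: coordinate `i` is `true`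
("open") iff the `i`-th extracted uniform is `< p`. -/
noncomputable def coords (ι : Type) [Countable ι] (p : ℝ) (x : ℝ) : ι → Bool :=
  letI : Encodable ι := Encodable.ofCountable ι
  fun i => decide (unif (Encodable.encode i) x < p)

/-- The Bernoulli(`p`) product measure on `ι → Bool`. -/
noncomputable def bernoulliProd (ι : Type) [Countable ι] (p : ℝ) :
    Measure (ι → Bool) :=
  Measure.map (coords ι p) (volume.restrict (Set.Ico (0 : ℝ) 1))

/-! ### Graphs: the class of graphs under consideration -/

/-- A simple, nonempty, locally finite, connected graph.  (Such a graph is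
automatically countable; we record countability as a field.) -/
structure SpaceGraph : Type 1 where
  V : Type
  G : SimpleGraph V
  connected : G.Connected
  locallyFinite : ∀ v : V, (G.neighborSet v).Finite
  countableV : Countable V

instance (Γ : SpaceGraph) : Countable Γ.V := Γ.countableV

/-! ### Combinatorial notions on plain simple graphs -/

/-- `u` and `v` are `k`-adjacent: `1 ≤ d_G(u,v) ≤ k`. -/
def kAdj {V : Type} (G : SimpleGraph V) (k : ℕ) (u v : V) : Prop :=
  1 ≤ G.dist u v ∧ G.dist u v ≤ k

/-- A set of vertices is `k`-connected if it is connected under `k`-adjacency. -/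
def kConnectedSet {V : Type} (G : SimpleGraph V) (k : ℕ) (A : Set V) : Prop :=
  ∀ x ∈ A, ∀ y ∈ A,
    Relation.ReflTransGen (fun a b => a ∈ A ∧ b ∈ A ∧ kAdj G k a b) x y

/-- Two distinct edges are `k`-adjacent if some endpoint of one lies at
distance at most `k` from some endpoint of the other. -/
def edgeKAdj {V : Type} (G : SimpleGraph V) (k : ℕ) (e f : Sym2 V) : Prop :=
  e ≠ f ∧ ∃ x ∈ e, ∃ y ∈ f, G.dist x y ≤ k

/-- A set of edges is `k`-connected if it is connected under `k`-adjacency. -/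
def edgeKConnectedSet {V : Type} (G : SimpleGraph V) (k : ℕ) (A : Set (Sym2 V)) : Prop :=
  ∀ e ∈ A, ∀ f ∈ A,
    Relation.ReflTransGen (fun a b => a ∈ A ∧ b ∈ A ∧ edgeKAdj G k a b) e f

/-- `A` is a cutset between `u` and `v`: every walk from `u` to `v` meets `A`. -/
def IsCutset {V : Type} (G : SimpleGraph V) (A : Set V) (u v : V) : Prop :=
  ∀ w : G.Walk u v, ∃ x ∈ w.support, x ∈ A

/-- `A` is a minimal cutset between `u` and `v`. -/
def IsMinCutset {V : Type} (G : SimpleGraph V) (A : Set V) (u v : V) : Prop :=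
  IsCutset G A u v ∧ ∀ B : Set V, B ⊂ A → ¬IsCutset G B u v

/-- `C(G) ≤ k`: every minimal cutset between two vertices is `k`-connected. -/
def cutConnLe {V : Type} (G : SimpleGraph V) (k : ℕ) : Prop :=
  ∀ u v : V, ∀ A : Set V, IsMinCutset G A u v → kConnectedSet G k A

/-- `C*(G) ≤ k`: every finite minimal cutset between two vertices is `k`-connected. -/
def cutConnStarLe {V : Type} (G : SimpleGraph V) (k : ℕ) : Prop :=
  ∀ u v : V, ∀ A : Set V, A.Finite → IsMinCutset G A u v → kConnectedSet G k A

/-- `A` is a bond-cutset between `u` and `v`: a set of edges of `G` such that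
every walk from `u` to `v` uses an edge of `A`. -/
def IsBondCutset {V : Type} (G : SimpleGraph V) (A : Set (Sym2 V)) (u v : V) : Prop :=
  A ⊆ G.edgeSet ∧ ∀ w : G.Walk u v, ∃ e ∈ w.edges, e ∈ A

/-- `A` is a minimal bond-cutset between `u` and `v`. -/
def IsMinBondCutset {V : Type} (G : SimpleGraph V) (A : Set (Sym2 V)) (u v : V) : Prop :=
  IsBondCutset G A u v ∧ ∀ B : Set (Sym2 V), B ⊂ A → ¬IsBondCutset G B u v

/-- `C_E(G) ≤ k`: every minimal bond-cutset between two vertices is `k`-connected. -/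
def edgeCutConnLe {V : Type} (G : SimpleGraph V) (k : ℕ) : Prop :=
  ∀ u v : V, ∀ A : Set (Sym2 V), IsMinBondCutset G A u v → edgeKConnectedSet G k A

/-- `C*_E(G) ≤ k`: every finite minimal bond-cutset between two vertices is
`k`-connected. -/
def edgeCutConnStarLe {V : Type} (G : SimpleGraph V) (k : ℕ) : Prop :=
  ∀ u v : V, ∀ A : Set (Sym2 V), A.Finite → IsMinBondCutset G A u v →
    edgeKConnectedSet G k A

/-- Reachability inside a set `S` of vertices. -/
def reachIn {V : Type} (G : SimpleGraph V) (S : Set V) : V → V → Prop :=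
  Relation.ReflTransGen fun a b => a ∈ S ∧ b ∈ S ∧ G.Adj a b

/-- There is a path from `x` to `y` all of whose vertices lie in `S`. -/
def pathIn {V : Type} (G : SimpleGraph V) (S : Set V) (x y : V) : Prop :=
  x ∈ S ∧ reachIn G S x y

/-- The connected component of `u` of the subgraph induced on `S`. -/
def compIn {V : Type} (G : SimpleGraph V) (S : Set V) (u : V) : Set V :=
  {v | pathIn G S u v}

/-- `G` is one-ended: for every finite set `F` of vertices, the complement of
`F` has exactly one infinite connected component. -/
def OneEnded {V : Type} (G : SimpleGraph V) : Prop :=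
  ∀ F : Set V, F.Finite →
    ∃ u, u ∉ F ∧ (compIn G Fᶜ u).Infinite ∧
      ∀ v, v ∉ F → (compIn G Fᶜ v).Infinite → pathIn G Fᶜ u v

/-- The outer vertex boundary `∂_V A`: vertices not in `A` adjacent to `A`. -/
def vertexBoundary {V : Type} (G : SimpleGraph V) (A : Set V) : Set V :=
  {v | v ∉ A ∧ ∃ u ∈ A, G.Adj u v}

/-- A fibration: a 1-Lipschitz map along which every edge at the image of `x`
lifts to an edge at `x`. -/
def IsFibration {V W : Type} (GrL : SimpleGraph V) (GrS : SimpleGraph W)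
    (pr : V → W) : Prop :=
  (∀ x y : V, GrS.dist (pr x) (pr y) ≤ GrL.dist x y) ∧
  (∀ (x : V) (v : W), GrS.Adj (pr x) v → ∃ y : V, GrL.Adj x y ∧ pr y = v)

/-- `φ` is an `A`-quasi-isometry. -/
def IsQI {V W : Type} (A : ℝ) (G : SimpleGraph V) (H : SimpleGraph W)
    (φ : V → W) : Prop :=
  (∀ x y : V, (1 / A) * (G.dist x y : ℝ) - A ≤ (H.dist (φ x) (φ y) : ℝ) ∧
      (H.dist (φ x) (φ y) : ℝ) ≤ A * (G.dist x y : ℝ) + A) ∧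
  (∀ z : W, ∃ x : V, (H.dist z (φ x) : ℝ) ≤ A)

/-- `G` and `H` are `A`-quasi-isometric (with `A`-quasi-inverse maps). -/
def QuasiIsometric {V W : Type} (A : ℝ) (G : SimpleGraph V) (H : SimpleGraph W) : Prop :=
  ∃ (φ : V → W) (ψ : W → V), IsQI A G H φ ∧ IsQI A H G ψ ∧
    (∀ x : V, (G.dist (ψ (φ x)) x : ℝ) ≤ A) ∧
    (∀ z : W, (H.dist (φ (ψ z)) z : ℝ) ≤ A)

/-! ### Balls, transitivity, the class `𝔊`, and the local topology -/

/-- The ball of radius `r` around `o`. -/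
def ball (Γ : SpaceGraph) (o : Γ.V) (r : ℕ) : Set Γ.V := {v | Γ.G.dist o v ≤ r}

/-- The sphere of radius `r` around `o`. -/
def sphere (Γ : SpaceGraph) (o : Γ.V) (r : ℕ) : Set Γ.V := {v | Γ.G.dist o v = r}

/-- `Γ` is (vertex-)transitive. -/
def IsTransitive (Γ : SpaceGraph) : Prop :=
  ∀ u v : Γ.V, ∃ φ : Γ.G ≃g Γ.G, φ u = v

/-- Membership in the class `𝔊`: transitive, superlinear growth, and
polynomial growth. -/
def InPolyClass (Γ : SpaceGraph) : Prop :=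
  IsTransitive Γ ∧
  (∀ (o : Γ.V) (K : ℕ), ∃ R : ℕ, ∀ r : ℕ, R ≤ r → K * r ≤ (ball Γ o r).ncard) ∧
  (∃ C d : ℕ, ∀ (o : Γ.V) (r : ℕ), 1 ≤ r → (ball Γ o r).ncard ≤ C * r ^ d)

lemma self_mem_ball (Γ : SpaceGraph) (o : Γ.V) (r : ℕ) : o ∈ ball Γ o r := by
  simp [ball, SimpleGraph.dist_self]

/-- The rooted balls of radius `r` in `Γ` (around `o`) and `Δ` (around `o'`)
are isomorphic, by an isomorphism matching the roots. -/
def rootedBallIso (Γ Δ : SpaceGraph) (o : Γ.V) (o' : Δ.V) (r : ℕ) : Prop :=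
  ∃ φ : Γ.G.induce (ball Γ o r) ≃g Δ.G.induce (ball Δ o' r),
    φ ⟨o, self_mem_ball Γ o r⟩ = ⟨o', self_mem_ball Δ o' r⟩

/-- `R(Γ,Δ) ≥ r`: the `r`-balls of `Γ` and `Δ` are isomorphic as rooted graphs. -/
def RGe (Γ Δ : SpaceGraph) (r : ℕ) : Prop :=
  ∃ (o : Γ.V) (o' : Δ.V), rootedBallIso Γ Δ o o' r

/-! ### Bernoulli percolation -/

/-- The probability of the event `A` under Bernoulli(`p`) bond percolation on `Γ`.
(Configurations assign a state to every element of `Sym2 Γ.V`; only the states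
of actual edges matter for the events considered.) -/
noncomputable def prob (Γ : SpaceGraph) (p : ℝ) (A : Set (Sym2 Γ.V → Bool)) : ℝ :=
  (bernoulliProd (Sym2 Γ.V) p A).toReal

/-- The probability of the event `A`, as an extended nonnegative real. -/
noncomputable def probNN (Γ : SpaceGraph) (p : ℝ) (A : Set (Sym2 Γ.V → Bool)) : ℝ≥0∞ :=
  bernoulliProd (Sym2 Γ.V) p A

/-- `u` and `v` are adjacent and the edge between them is open in `ω`. -/
def openAdj (Γ : SpaceGraph) (ω : Sym2 Γ.V → Bool) (u v : Γ.V) : Prop :=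
  Γ.G.Adj u v ∧ ω s(u, v) = true

/-- `u` and `v` are connected by an open path in `ω`. -/
def Conn (Γ : SpaceGraph) (ω : Sym2 Γ.V → Bool) (u v : Γ.V) : Prop :=
  Relation.ReflTransGen (openAdj Γ ω) u v

/-- The (open) cluster of `u` in `ω`. -/
def cluster (Γ : SpaceGraph) (ω : Sym2 Γ.V → Bool) (u : Γ.V) : Set Γ.V :=
  {v | Conn Γ ω u v}

/-- `θ_Γ(p)` with root `o` (independent of `o` for transitive graphs). -/
noncomputable def theta (Γ : SpaceGraph) (o : Γ.V) (p : ℝ) : ℝ :=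
  prob Γ p {ω | (cluster Γ ω o).Infinite}

/-- The critical parameter `p_c(Γ)` (with root `o`). -/
noncomputable def pc (Γ : SpaceGraph) (o : Γ.V) : ℝ :=
  sInf ({1} ∪ {p : ℝ | p ∈ Set.Icc (0 : ℝ) 1 ∧ 0 < theta Γ o p})


/-! ### Good and bad vertices, interfaces -/

/-- Open connectivity using only vertices of `S`. -/
def ConnIn (Γ : SpaceGraph) (ω : Sym2 Γ.V → Bool) (S : Set Γ.V) (u v : Γ.V) : Prop :=
  Relation.ReflTransGen (fun a b => a ∈ S ∧ b ∈ S ∧ openAdj Γ ω a b) u v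

/-- The uniqueness event `U(m,n,x)`: at most one cluster of `ω` restricted to
`B(x,n)` intersects both `B(x,m)` and `S(x,n)`. -/
def UEvent (Γ : SpaceGraph) (ω : Sym2 Γ.V → Bool) (m n : ℕ) (x : Γ.V) : Prop :=
  ∀ a b a' b' : Γ.V, a ∈ ball Γ x m → b ∈ sphere Γ x n →
    a' ∈ ball Γ x m → b' ∈ sphere Γ x n →
    ConnIn Γ ω (ball Γ x n) a b → ConnIn Γ ω (ball Γ x n) a' b' →
    ConnIn Γ ω (ball Γ x n) a a'

/-- `x` is `N`-good in `ω`. -/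
def NGood (Γ : SpaceGraph) (ω : Sym2 Γ.V → Bool) (N : ℕ) (x : Γ.V) : Prop :=
  ∀ z : Γ.V, (z = x ∨ Γ.G.Adj x z) →
    (∃ a ∈ ball Γ z N, ∃ b ∈ sphere Γ z (10 * N), Conn Γ ω a b) ∧
      UEvent Γ ω (2 * N) (5 * N) z

/-- `x` is `N`-bad in `ω`. -/
def NBad (Γ : SpaceGraph) (ω : Sym2 Γ.V → Bool) (N : ℕ) (x : Γ.V) : Prop :=
  ¬NGood Γ ω N x

/-- `C_x^bad(N)`: the `t`-connected component of `x` within the `N`-bad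
vertices (empty if `x` is `N`-good). -/
def badComp (Γ : SpaceGraph) (ω : Sym2 Γ.V → Bool) (N t : ℕ) (x : Γ.V) : Set Γ.V :=
  {y | NBad Γ ω N x ∧
    Relation.ReflTransGen (fun a b => NBad Γ ω N a ∧ NBad Γ ω N b ∧ kAdj Γ.G t a b) x y}

/-- `C_o(N)`: the set of vertices within distance `N` of the cluster of `o`. -/
def clusterNbhd (Γ : SpaceGraph) (ω : Sym2 Γ.V → Bool) (o : Γ.V) (N : ℕ) : Set Γ.V :=
  {v | ∃ u ∈ cluster Γ ω o, Γ.G.dist v u ≤ N}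

/-- The exposed boundary `∂A`: vertices of `A` adjacent to an infinite
connected component of the complement of `A`. -/
def exposedBoundary (Γ : SpaceGraph) (A : Set Γ.V) : Set Γ.V :=
  {v | v ∈ A ∧ ∃ w, w ∉ A ∧ Γ.G.Adj v w ∧ (compIn Γ.G Aᶜ w).Infinite}

/-- An interface (relative to the root `o` and the connectivity constant `t`):
a finite `t`-connected set of vertices containing `o` or surrounding `o`. -/
def IsInterface (Γ : SpaceGraph) (o : Γ.V) (t : ℕ) (I : Finset Γ.V) : Prop :=
  kConnectedSet Γ.G t (↑I : Set Γ.V) ∧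
    (o ∈ I ∨ (o ∉ I ∧ (compIn Γ.G ((↑I : Set Γ.V))ᶜ o).Finite))

/-- The set of vertices within distance `r` of `I`. -/
def interfaceNbhd (Γ : SpaceGraph) (I : Finset Γ.V) (r : ℕ) : Set Γ.V :=
  {v | ∃ y ∈ I, Γ.G.dist v y ≤ r}

/-- The interface `I` occurs in `ω` at scale `N`: all its vertices are `N`-bad,
all vertices at distance between `1` and `t` from it are `N`-good, and the
closed edges with both endpoints within distance `5N` of `I` form a
bond-cutset between `o` and infinity. -/
def InterfaceOccurs (Γ : SpaceGraph) (o : Γ.V) (t N : ℕ) (ω : Sym2 Γ.V → Bool)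
    (I : Finset Γ.V) : Prop :=
  (∀ x ∈ I, NBad Γ ω N x) ∧
  (∀ x : Γ.V, x ∉ I → (∃ y ∈ I, Γ.G.dist x y ≤ t) → NGood Γ ω N x) ∧
  (∀ f : ℕ → Γ.V, f 0 = o → Function.Injective f →
    (∀ n : ℕ, Γ.G.Adj (f n) (f (n + 1))) →
    ∃ n : ℕ, ω s(f n, f (n + 1)) = false ∧
      f n ∈ interfaceNbhd Γ I (5 * N) ∧ f (n + 1) ∈ interfaceNbhd Γ I (5 * N))

/-- A multi-interface: a finite nonempty collection of pairwise disjoint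
interfaces. -/
def IsMultiInterface (Γ : SpaceGraph) (o : Γ.V) (t : ℕ)
    (M : Finset (Finset Γ.V)) : Prop :=
  M.Nonempty ∧ (∀ I ∈ M, IsInterface Γ o t I) ∧
    ∀ I ∈ M, ∀ J ∈ M, I ≠ J → Disjoint I J

/-- The size of a multi-interface. -/
def multiSize {α : Type} (M : Finset (Finset α)) : ℕ := ∑ I ∈ M, I.card

/-- The multi-interface `M` occurs in `ω` at scale `N`. -/
def MultiOccurs (Γ : SpaceGraph) (o : Γ.V) (t N : ℕ) (ω : Sym2 Γ.V → Bool)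
    (M : Finset (Finset Γ.V)) : Prop :=
  ∀ I ∈ M, InterfaceOccurs Γ o t N ω I

/-! ### Growth degree and dimension -/

/-- `Γ` has growth of degree at most `d`. -/
def growthLe (Γ : SpaceGraph) (d : ℕ) : Prop :=
  ∃ C : ℕ, ∀ (o : Γ.V) (r : ℕ), 1 ≤ r → (ball Γ o r).ncard ≤ C * r ^ d

/-- The dimension of a graph of polynomial growth: the least degree `d` of a
polynomial upper bound on the growth. -/
noncomputable def dimen (Γ : SpaceGraph) : ℕ := sInf {d | growthLe Γ d}

/-! ### Cayley graphs and products of cycle-graphs -/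

/-- The Cayley graph of a group `K` with respect to a (symmetrized) set `T`. -/
def cayley (K : Type) [Group K] (T : Set K) : SimpleGraph K where
  Adj g h := g ≠ h ∧ (g⁻¹ * h ∈ T ∨ h⁻¹ * g ∈ T)
  symm := ⟨by
    rintro g h ⟨hgh, hmem⟩
    exact ⟨hgh.symm, hmem.symm⟩⟩
  loopless := ⟨fun g h => h.1 rfl⟩

/-- A finitely generated group is one-ended if all of its Cayley graphs with
respect to finite generating sets are one-ended. -/
def GroupOneEnded (K : Type) [Group K] : Prop :=
  ∀ T : Set K, T.Finite → Subgroup.closure T = ⊤ → OneEnded (cayley K T)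

/-- The box product of a finite family of graphs. -/
def boxProd {m : ℕ} (Vf : Fin m → Type) (Gf : ∀ i, SimpleGraph (Vf i)) :
    SimpleGraph (∀ i, Vf i) where
  Adj a b := ∃ i, (Gf i).Adj (a i) (b i) ∧ ∀ j, j ≠ i → a j = b j
  symm := ⟨by
    rintro a b ⟨i, hadj, h⟩
    exact ⟨i, hadj.symm, fun j hj => (h j hj).symm⟩⟩
  loopless := ⟨by
    rintro a ⟨i, hadj, -⟩
    exact (Gf i).loopless.irrefl _ hadj⟩

/-- Membership in the class `𝔄`: products of finitely many cycle-graphs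
(connected graphs in which every vertex has degree 2), at least two of which
are infinite. -/
def InA (Γ : SpaceGraph) : Prop :=
  ∃ (m : ℕ) (Vf : Fin m → Type) (Gf : ∀ i, SimpleGraph (Vf i)),
    (∀ i, (Gf i).Connected) ∧
    (∀ (i : Fin m) (v : Vf i), ((Gf i).neighborSet v).ncard = 2) ∧
    (∃ i j : Fin m, i ≠ j ∧ Infinite (Vf i) ∧ Infinite (Vf j)) ∧
    Nonempty (Γ.G ≃g boxProd Vf Gf)

/-!
Let `A` be a finite minimal bond-cutset of `𝓢` between `u` and `v`. One-endedness gives a vertex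
`κ` in the infinite component `K` of the complement of the endpoints of `A`; up to swapping `u`
and `v`, `κ` lies on the side of `v` in `𝓢 − A`. Let `C` be the component of a lift `x` of `u` in
`𝓛 − π⁻¹A`. Since `π⁻¹(K)` is connected and avoids `π⁻¹A`, lifting paths shows that every vertex
over the side of `v` is joined to a lift `y` of `κ` in `𝓛 − π⁻¹A`, so the edge boundary of `C`
is a minimal bond-cutset between `x` and `y`, hence `k`-connected. Lifting the walks that cross
`A` exactly once shows that this boundary maps onto `A`, and as `π` is 1-Lipschitz, `k`-adjacent
edges map to equal or `k`-adjacent edges.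
-/

open SimpleGraph

section BondCutsets

variable {V : Type} {G : SimpleGraph V} {A B : Set (Sym2 V)} {u v x y : V}

theorem exists_walk_avoiding_iff_reachable_deleteEdges :
    (∃ w : G.Walk u v, ∀ e ∈ w.edges, e ∉ A) ↔ (G.deleteEdges A).Reachable u v := by
  constructor
  · rintro ⟨w, hw⟩
    exact ⟨w.toDeleteEdges A hw⟩
  · rintro ⟨p⟩
    refine ⟨p.mapLe (G.deleteEdges_le A), fun e he => ?_⟩
    rw [Walk.edges_mapLe_eq_edges] at he
    have := p.edges_subset_edgeSet he
    rw [edgeSet_deleteEdges] at this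
    exact this.2

theorem isBondCutset_iff :
    IsBondCutset G A u v ↔ A ⊆ G.edgeSet ∧ ¬(G.deleteEdges A).Reachable u v := by
  rw [IsBondCutset, ← exists_walk_avoiding_iff_reachable_deleteEdges]
  push Not
  rfl

theorem IsMinBondCutset.symm (h : IsMinBondCutset G A u v) : IsMinBondCutset G A v u := by
  simp only [IsMinBondCutset, isBondCutset_iff, reachable_comm (u := v)] at h ⊢
  exact h

theorem IsMinBondCutset.not_reachable (h : IsMinBondCutset G A u v) :
    ¬(G.deleteEdges A).Reachable u v :=
  (isBondCutset_iff.1 h.1).2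

theorem IsMinBondCutset.reachable_deleteEdges_diff_singleton (h : IsMinBondCutset G A u v)
    {e : Sym2 V} (he : e ∈ A) : (G.deleteEdges (A \ {e})).Reachable u v := by
  by_contra hcut
  exact h.2 _ (Set.sdiff_singleton_ssubset.2 he)
    (isBondCutset_iff.2 ⟨Set.sdiff_subset.trans h.1.1, hcut⟩)

def edgeBoundary (G : SimpleGraph V) (C : Set V) : Set (Sym2 V) :=
  {e | ∃ d : G.Dart, d.edge = e ∧ d.fst ∈ C ∧ d.snd ∉ C}

theorem exists_dart_mem_edgeBoundary (w : G.Walk x y) {C : Set V} (hx : x ∈ C)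
    (hy : y ∉ C) : ∃ d ∈ w.darts, d.fst ∈ C ∧ d.edge ∈ edgeBoundary G C := by
  obtain ⟨d, hd, hfst, hsnd⟩ := w.exists_boundary_dart C hx hy
  exact ⟨d, hd, hfst, d, rfl, hfst, hsnd⟩

theorem edgeBoundary_reachable_subset :
    edgeBoundary G {z | (G.deleteEdges B).Reachable x z} ⊆ B := by
  rintro _ ⟨d, rfl, hfst, hsnd⟩
  by_contra hd
  exact hsnd (hfst.trans (deleteEdges_adj.2 ⟨d.adj, hd⟩).reachable)

theorem isBondCutset_edgeBoundary {C : Set V} (hx : x ∈ C) (hy : y ∉ C) :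
    IsBondCutset G (edgeBoundary G C) x y := by
  refine ⟨fun _ ⟨d, hd, _⟩ => hd ▸ d.edge_mem, fun w => ?_⟩
  obtain ⟨d, hd, -, hbd⟩ := exists_dart_mem_edgeBoundary w hx hy
  exact ⟨d.edge, List.mem_map_of_mem hd, hbd⟩

/-- Each boundary edge is the only edge of the cutset on some walk from `x` to `y`. -/
theorem isMinBondCutset_edgeBoundary_reachable (hxy : ¬(G.deleteEdges B).Reachable x y)
    (hout : ∀ d : G.Dart, (G.deleteEdges B).Reachable x d.fst →
      ¬(G.deleteEdges B).Reachable x d.snd → (G.deleteEdges B).Reachable d.snd y) :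
    IsMinBondCutset G (edgeBoundary G {z | (G.deleteEdges B).Reachable x z}) x y := by
  refine ⟨isBondCutset_edgeBoundary (Reachable.refl x) hxy, fun D hD hDcut => ?_⟩
  obtain ⟨_, ⟨d, rfl, hfst, hsnd⟩, hdD⟩ := Set.exists_of_ssubset hD
  have hmono : G.deleteEdges B ≤ G.deleteEdges D :=
    deleteEdges_anti (hD.subset.trans edgeBoundary_reachable_subset)
  have hcross : (G.deleteEdges D).Adj d.fst d.snd := deleteEdges_adj.2 ⟨d.adj, hdD⟩
  exact (isBondCutset_iff.1 hDcut).2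
    ((hfst.mono hmono).trans (hcross.reachable.trans ((hout d hfst hsnd).mono hmono)))

theorem IsMinBondCutset.reachable_of_mem (h : IsMinBondCutset G A u v) {a b : V}
    (hab : s(a, b) ∈ A) (ha : (G.deleteEdges A).Reachable u a) :
    (G.deleteEdges A).Reachable v b := by
  obtain ⟨w, hw⟩ :=
    exists_walk_avoiding_iff_reachable_deleteEdges.2 (h.reachable_deleteEdges_diff_singleton hab)
  obtain ⟨d, hd, hfst, hbd⟩ := exists_dart_mem_edgeBoundary w.reverse
    (C := {z | (G.deleteEdges A).Reachable v z}) (Reachable.refl v)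
    (fun hvu => h.not_reachable hvu.symm)
  have hdA : d.edge ∈ A := edgeBoundary_reachable_subset hbd
  have hdw : d.edge ∈ w.edges := by
    rw [← List.mem_reverse, ← Walk.edges_reverse]
    exact List.mem_map_of_mem hd
  have hde : d.edge = s(a, b) := by
    by_contra hne
    exact hw _ hdw ⟨hdA, hne⟩
  rcases Sym2.eq_iff.1 hde with ⟨hfa, -⟩ | ⟨hfb, -⟩
  · exact absurd (ha.trans (hfa ▸ hfst).symm) h.not_reachable
  · exact hfb ▸ hfst

theorem IsMinBondCutset.reachable_or_reachable (h : IsMinBondCutset G A u v)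
    (hG : G.Preconnected) (z : V) :
    (G.deleteEdges A).Reachable u z ∨ (G.deleteEdges A).Reachable v z := by
  induction (reachable_iff_reflTransGen u z).1 (hG u z) with
  | refl => exact Or.inl (Reachable.refl u)
  | @tail b c _ hbc ih =>
    by_cases hA : s(b, c) ∈ A
    · rcases ih with hub | hvb
      · exact Or.inr (h.reachable_of_mem hA hub)
      · exact Or.inl (h.symm.reachable_of_mem hA hvb)
    · have hstep := (deleteEdges_adj.2 ⟨hbc, hA⟩).reachable
      exact ih.imp (·.trans hstep) (·.trans hstep)

end BondCutsets

theorem Sym2.finite_setOf_mem {α : Type*} (e : Sym2 α) : {a | a ∈ e}.Finite := by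
  classical
  exact e.toFinset.finite_toSet.subset fun _ => Sym2.mem_toFinset.2

theorem mem_of_mem_compIn {V : Type} {G : SimpleGraph V} {S : Set V} {u w : V}
    (hw : w ∈ compIn G S u) : w ∈ S := by
  obtain ⟨hu, hr⟩ := hw
  induction hr with
  | refl => exact hu
  | tail _ hstep => exact hstep.2.1

theorem reachable_deleteEdges_of_pathIn {V : Type} {G : SimpleGraph V} {S : Set V}
    {B : Set (Sym2 V)} (hB : ∀ e ∈ B, ∀ a ∈ e, a ∉ S) {x y : V} (h : pathIn G S x y) :
    (G.deleteEdges B).Reachable x y := by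
  refine (reachable_iff_reflTransGen x y).2 (Relation.ReflTransGen.mono ?_ _ _ h.2)
  rintro a b ⟨ha, -, hab⟩
  exact deleteEdges_adj.2 ⟨hab, fun habB => hB _ habB a (Sym2.mem_mk_left a b) ha⟩

theorem edgeKConnectedSet_image {V W : Type} {G : SimpleGraph V} {H : SimpleGraph W}
    {f : V → W} (hf : ∀ x y, H.dist (f x) (f y) ≤ G.dist x y) {k : ℕ} {P : Set (Sym2 V)}
    (hP : edgeKConnectedSet G k P) : edgeKConnectedSet H k (Sym2.map f '' P) := by
  rintro _ ⟨e, he, rfl⟩ _ ⟨e', he', rfl⟩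
  refine Relation.ReflTransGen.lift' (Sym2.map f) (fun a b ⟨ha, hb, _, x, hx, y, hy, hxy⟩ => ?_)
    _ _ (hP e he e' he')
  by_cases hab : Sym2.map f a = Sym2.map f b
  · rw [Function.onFun, hab]
  · exact .single ⟨⟨a, ha, rfl⟩, ⟨b, hb, rfl⟩, hab, f x, Sym2.mem_map.2 ⟨x, hx, rfl⟩,
      f y, Sym2.mem_map.2 ⟨y, hy, rfl⟩, (hf x y).trans hxy⟩

namespace IsFibration

variable {V W : Type} {GrL : SimpleGraph V} {GrS : SimpleGraph W} {pr : V → W}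
  {A : Set (Sym2 W)} {u v : W} {x y : V}

theorem eq_or_adj (hfib : IsFibration GrL GrS pr) (hS : GrS.Preconnected) (h : GrL.Adj x y) :
    pr x = pr y ∨ GrS.Adj (pr x) (pr y) := by
  have hdist : GrS.dist (pr x) (pr y) ≤ 1 := (hfib.1 x y).trans (dist_eq_one_iff_adj.2 h).le
  rcases Nat.le_one_iff_eq_zero_or_eq_one.1 hdist with h0 | h1
  · exact Or.inl ((hS _ _).dist_eq_zero_iff.1 h0)
  · exact Or.inr (dist_eq_one_iff_adj.1 h1)

theorem exists_lift_walk (hfib : IsFibration GrL GrS pr) {a b : W} (w : GrS.Walk a b)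
    (hx : pr x = a) :
    ∃ y, pr y = b ∧ ∃ wL : GrL.Walk x y, wL.edges.map (Sym2.map pr) = w.edges := by
  induction w generalizing x with
  | nil => exact ⟨x, hx, .nil, rfl⟩
  | cons hac _ ih =>
    obtain ⟨x', hxx', hx'⟩ := hfib.2 x _ (hx ▸ hac)
    obtain ⟨y, hy, wL, hwL⟩ := ih hx'
    refine ⟨y, hy, .cons hxx' wL, ?_⟩
    simp [hwL, hx, hx']

theorem surjective (hfib : IsFibration GrL GrS pr) (hS : GrS.Preconnected) [Nonempty V] :
    Function.Surjective pr := fun b =>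
  let x₀ : V := Classical.arbitrary V
  let ⟨y, hy, _⟩ := hfib.exists_lift_walk (hS (pr x₀) b).some rfl
  ⟨y, hy⟩

theorem exists_lift_reachable_deleteEdges (hfib : IsFibration GrL GrS pr) {b : W}
    (h : (GrS.deleteEdges A).Reachable (pr x) b) :
    ∃ y, pr y = b ∧ (GrL.deleteEdges (Sym2.map pr ⁻¹' A)).Reachable x y := by
  obtain ⟨w, hw⟩ := exists_walk_avoiding_iff_reachable_deleteEdges.2 h
  obtain ⟨y, hy, wL, hwL⟩ := hfib.exists_lift_walk w rfl
  refine ⟨y, hy, exists_walk_avoiding_iff_reachable_deleteEdges.1 ⟨wL, fun e he => ?_⟩⟩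
  exact hw _ (hwL ▸ List.mem_map_of_mem he)

theorem reachable_deleteEdges_map (hfib : IsFibration GrL GrS pr) (hS : GrS.Preconnected)
    (h : (GrL.deleteEdges (Sym2.map pr ⁻¹' A)).Reachable x y) :
    (GrS.deleteEdges A).Reachable (pr x) (pr y) := by
  rw [reachable_iff_reflTransGen] at h ⊢
  refine Relation.ReflTransGen.lift' pr (fun a b hab => ?_) _ _ h
  obtain ⟨hab, habA⟩ := deleteEdges_adj.1 hab
  rcases hfib.eq_or_adj hS hab with heq | hadj
  · rw [Function.onFun, heq]
  · exact (reachable_iff_reflTransGen _ _).1 (deleteEdges_adj.2 ⟨hadj, habA⟩).reachable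


theorem image_edgeBoundary_eq (hfib : IsFibration GrL GrS pr) (hS : GrS.Preconnected)
    (hmin : IsMinBondCutset GrS A u v) (hx : pr x = u) :
    Sym2.map pr '' edgeBoundary GrL {z | (GrL.deleteEdges (Sym2.map pr ⁻¹' A)).Reachable x z}
      = A := by
  refine subset_antisymm (Set.image_subset_iff.2 edgeBoundary_reachable_subset) fun e he => ?_
  obtain ⟨w, hw⟩ := exists_walk_avoiding_iff_reachable_deleteEdges.2
    (hmin.reachable_deleteEdges_diff_singleton he)
  obtain ⟨y, hy, wL, hwL⟩ := hfib.exists_lift_walk w hx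
  have hxy : ¬(GrL.deleteEdges (Sym2.map pr ⁻¹' A)).Reachable x y := fun hxy =>
    hmin.not_reachable (hx ▸ hy ▸ hfib.reachable_deleteEdges_map hS hxy)
  obtain ⟨d, hd, -, hbd⟩ := exists_dart_mem_edgeBoundary wL
    (C := {z | (GrL.deleteEdges (Sym2.map pr ⁻¹' A)).Reachable x z}) (Reachable.refl x) hxy
  have hdA : d.edge ∈ Sym2.map pr ⁻¹' A := edgeBoundary_reachable_subset hbd
  refine ⟨d.edge, hbd, ?_⟩
  by_contra hne
  exact hw _ (hwL ▸ List.mem_map_of_mem (List.mem_map_of_mem hd)) ⟨hdA, hne⟩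

theorem edgeKConnectedSet_of_isMinBondCutset (hfib : IsFibration GrL GrS pr)
    (hS : GrS.Preconnected) {k : ℕ} (hL : edgeCutConnLe GrL k)
    (hmin : IsMinBondCutset GrS A u v) (hx : pr x = u)
    (hyv : (GrS.deleteEdges A).Reachable v (pr y))
    (hy : ∀ z, (GrS.deleteEdges A).Reachable v (pr z) →
      (GrL.deleteEdges (Sym2.map pr ⁻¹' A)).Reachable z y) :
    edgeKConnectedSet GrS k A := by
  have hxy : ¬(GrL.deleteEdges (Sym2.map pr ⁻¹' A)).Reachable x y := fun hxy =>
    hmin.not_reachable ((hx ▸ hfib.reachable_deleteEdges_map hS hxy).trans hyv.symm)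
  have hcut := isMinBondCutset_edgeBoundary_reachable hxy fun d hfst hsnd => by
    have hdA : d.edge ∈ Sym2.map pr ⁻¹' A := edgeBoundary_reachable_subset ⟨d, rfl, hfst, hsnd⟩
    exact hy d.snd (hmin.reachable_of_mem hdA (hx ▸ hfib.reachable_deleteEdges_map hS hfst))
  rw [← hfib.image_edgeBoundary_eq hS hmin hx]
  exact edgeKConnectedSet_image hfib.1 (hL x y _ hcut)

theorem reachable_deleteEdges_of_preimage_connected (hfib : IsFibration GrL GrS pr)
    {K : Set W} (hKA : ∀ e ∈ A, ∀ a ∈ e, a ∉ K)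
    (hK : ∀ x y, pr x ∈ K → pr y ∈ K → pathIn GrL (pr ⁻¹' K) x y) (hy : pr y ∈ K) {z : V}
    (hz : (GrS.deleteEdges A).Reachable (pr z) (pr y)) :
    (GrL.deleteEdges (Sym2.map pr ⁻¹' A)).Reachable z y := by
  obtain ⟨z', hz', hzz'⟩ := hfib.exists_lift_reachable_deleteEdges hz
  refine hzz'.trans (reachable_deleteEdges_of_pathIn ?_ (hK z' y (hz' ▸ hy) hy))
  intro e he a hae
  exact hKA _ he (pr a) (Sym2.mem_map.2 ⟨a, hae, rfl⟩)

end IsFibration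

theorem edgeCutConnStar_le_of_fibration_general
    {V W : Type} (GrL : SimpleGraph V) (GrS : SimpleGraph W)
    (hneL : Nonempty V)
    (hSconn : GrS.Connected)
    (pr : V → W) (hfib : IsFibration GrL GrS pr)
    (hone : OneEnded GrS)
    (hpre : ∀ F : Set W, F.Finite → ∀ u : W, u ∉ F → (compIn GrS Fᶜ u).Infinite →
      ∀ x y : V, x ∈ pr ⁻¹' (compIn GrS Fᶜ u) → y ∈ pr ⁻¹' (compIn GrS Fᶜ u) →
        pathIn GrL (pr ⁻¹' (compIn GrS Fᶜ u)) x y) :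
    ∀ k : ℕ, 1 ≤ k → edgeCutConnLe GrL k → edgeCutConnStarLe GrS k := by
  intro k _ hL u v A hA hmin
  set F : Set W := ⋃ e ∈ A, {a | a ∈ e}
  have hF : F.Finite := hA.biUnion fun e _ => Sym2.finite_setOf_mem e
  obtain ⟨κ, hκF, hκinf, -⟩ := hone F hF
  have hKA : ∀ e ∈ A, ∀ a ∈ e, a ∉ compIn GrS Fᶜ κ := fun e he a hae haK =>
    mem_of_mem_compIn haK (Set.mem_biUnion he hae)
  wlog hκv : (GrS.deleteEdges A).Reachable v κ generalizing u v
  · exact this v u hmin.symm ((hmin.reachable_or_reachable hSconn.preconnected κ).resolve_right hκv)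
  obtain ⟨x, hx⟩ := hfib.surjective hSconn.preconnected u
  obtain ⟨y, rfl⟩ := hfib.surjective hSconn.preconnected κ
  exact hfib.edgeKConnectedSet_of_isMinBondCutset hSconn.preconnected hL hmin hx hκv fun z hz =>
    hfib.reachable_deleteEdges_of_preimage_connected hKA (hpre F hF _ hκF hκinf)
      ⟨hκF, .refl⟩ (hz.symm.trans hκv)

/-- Proposition: cutconnectivity and fibrations.
If `π : V(𝓛) → V(𝓢)` is a fibration, `𝓢` is one-ended, and for every finite
`F ⊆ V(𝓢)` the subgraph of `𝓛` induced on the preimage of the infinite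
component of the complement of `F` is connected, then `C*_E(𝓢) ≤ C_E(𝓛)`. -/
theorem edgeCutConnStar_le_of_fibration
    {V W : Type} (GrL : SimpleGraph V) (GrS : SimpleGraph W)
    (hneL : Nonempty V) (hneS : Nonempty W)
    (hLconn : GrL.Connected) (hSconn : GrS.Connected)
    (hlfL : ∀ v : V, (GrL.neighborSet v).Finite)
    (hlfS : ∀ w : W, (GrS.neighborSet w).Finite)
    (pr : V → W) (hfib : IsFibration GrL GrS pr)
    (hone : OneEnded GrS)
    (hpre : ∀ F : Set W, F.Finite → ∀ u : W, u ∉ F → (compIn GrS Fᶜ u).Infinite →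
      ∀ x y : V, x ∈ pr ⁻¹' (compIn GrS Fᶜ u) → y ∈ pr ⁻¹' (compIn GrS Fᶜ u) →
        pathIn GrL (pr ⁻¹' (compIn GrS Fᶜ u)) x y) :
    ∀ k : ℕ, 1 ≤ k → edgeCutConnLe GrL k → edgeCutConnStarLe GrS k :=
  edgeCutConnStar_le_of_fibration_general GrL GrS hneL hSconn pr hfib hone hpre

end PercPaper
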